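/- For every real number α with 0 < α < 1/2, the inequality h₂(α,α) > h₁(α,α) holds, where h₁(α,β) := α(1−α+β)·(1+3α−β)/2 + α²(1−α−β) + 2α² + α³/(1−2α) and h₂(α,β) := αβ(1−α−β) + αβ(1−α+3β) + β(1−α−β)·(1+3β)/2 + 2β² + β³/(1−2β). (This is the key algebraic inequality in the proof of the dominating theorem: with mining powers α = β, the insightful pool's lower-bounded expected reward h₂(α,β)·π₍₀,₀₎ strictly exceeds the selfish pool's expected reward h₁(α,β)·π₍₀,₀₎.) -/

import Mathlib

/-- `h₁(α,β)` : the selfish pool's expected reward coefficient. -/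
noncomputable def h₁ (α β : ℝ) : ℝ :=
  α * (1 - α + β) * ((1 + 3*α - β) / 2) + α^2 * (1 - α - β) + 2*α^2 + α^3 / (1 - 2*α)

/-- `h₂(α,β)` : lower bound coefficient for the insightful pool's expected reward. -/
noncomputable def h₂ (α β : ℝ) : ℝ :=
  α * β * (1 - α - β) + α * β * (1 - α + 3*β) + β * (1 - α - β) * ((1 + 3*β) / 2)
    + 2*β^2 + β^3 / (1 - 2*β)

/- On the diagonal the singular terms `α³ / (1 - 2α)` of `h₁` and `h₂` coincide and cancel,
so the difference is a polynomial, valid for every `α`. -/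
theorem h₂_self_sub_h₁_self (α : ℝ) : h₂ α α - h₁ α α = α ^ 2 * (1 - 2 * α) / 2 := by
  unfold h₁ h₂
  ring

theorem key_inequality (α : ℝ) (h0 : 0 < α) (h1 : α < 1/2) :
    h₂ α α > h₁ α α := by
  have h_gap : 0 < 1 - 2 * α := by linarith
  rw [gt_iff_lt, ← sub_pos, h₂_self_sub_h₁_self]
  positivity
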